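/- arXiv:1108.3208 — 2 statements merged into one kernel-verified Lean document; each statement's English description precedes it below -/
import Mathlib

section
/- Let V and W be operator spaces. The algebraic tensor product V⊗W is complete with respect to the operator space projective tensor norm ‖·‖_∧ if and only if V or W is finite dimensional. -/
/-!
Common definitions for formalizing "Spectral synthesis for the operator space
projective tensor product of C*-algebras" (Jain–Kumar).
-/

noncomputable section

open scoped TensorProduct
open Topology Filter

/-- The operator norm of a (rectangular) complex scalar matrix, viewed as an operator
between the corresponding Euclidean (ℓ²) spaces. -/
noncomputable def matOpNormC {m n : Type} [Fintype m] [Fintype n] (γ : Matrix m n ℂ) : ℝ :=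
  sSup {r | ∃ x : n → ℂ, (∑ j, ‖x j‖ ^ 2) ≤ 1 ∧ r = Real.sqrt (∑ i, ‖∑ j, γ i j * x j‖ ^ 2)}

/-- An (abstract) operator space structure on a complex normed space `V`:
a family of matrix norms on the square matrix levels `Mₙ(V)` satisfying Ruan's axioms
and extending the norm of `V` at the first level. -/
structure OperatorSpaceStructure (V : Type) [NormedAddCommGroup V] [NormedSpace ℂ V] where
  matNorm : ∀ {p : ℕ}, Matrix (Fin p) (Fin p) V → ℝ
  matNorm_one : ∀ v : Matrix (Fin 1) (Fin 1) V, matNorm v = ‖v 0 0‖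
  matNorm_add_le : ∀ {p : ℕ} (v w : Matrix (Fin p) (Fin p) V),
    matNorm (v + w) ≤ matNorm v + matNorm w
  matNorm_smul : ∀ {p : ℕ} (c : ℂ) (v : Matrix (Fin p) (Fin p) V),
    matNorm (c • v) = ‖c‖ * matNorm v
  matNorm_eq_zero_iff : ∀ {p : ℕ} (v : Matrix (Fin p) (Fin p) V), matNorm v = 0 ↔ v = 0
  /-- Ruan's axiom: `‖γ v δ‖ ≤ ‖γ‖ ‖v‖ ‖δ‖` for scalar matrices `γ, δ`. -/
  matNorm_comp_le : ∀ {p q : ℕ} (γ : Matrix (Fin q) (Fin p) ℂ) (v : Matrix (Fin p) (Fin p) V)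
    (δ : Matrix (Fin p) (Fin q) ℂ),
    matNorm (Matrix.of fun i j => ∑ k, ∑ l, (γ i k * δ l j) • v k l) ≤
      matOpNormC γ * matNorm v * matOpNormC δ
  /-- Ruan's axiom: the norm of a direct sum is the maximum of the norms. -/
  matNorm_dirSum : ∀ {p q : ℕ} (v : Matrix (Fin p) (Fin p) V) (w : Matrix (Fin q) (Fin q) V),
    matNorm (Matrix.reindex finSumFinEquiv finSumFinEquiv (Matrix.fromBlocks v 0 0 w)) =
      max (matNorm v) (matNorm w)

/-- The operator space projective tensor norm `‖u‖_∧` of `u ∈ V ⊗ W`, with respect to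
given operator space structures on `V` and `W`:
`‖u‖_∧ = inf {‖α‖‖v‖‖w‖‖β‖ : u = α (v ⊗ w) β}`, where `α ∈ M_{1,pq}(ℂ)`,
`v ∈ M_p(V)`, `w ∈ M_q(W)`, `β ∈ M_{pq,1}(ℂ)`. -/
noncomputable def osProjNorm {V W : Type} [NormedAddCommGroup V] [NormedSpace ℂ V]
    [NormedAddCommGroup W] [NormedSpace ℂ W]
    (osV : OperatorSpaceStructure V) (osW : OperatorSpaceStructure W) (u : V ⊗[ℂ] W) : ℝ :=
  sInf {r | ∃ (p q : ℕ) (α : Matrix (Fin 1) (Fin p × Fin q) ℂ) (v : Matrix (Fin p) (Fin p) V)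
    (w : Matrix (Fin q) (Fin q) W) (β : Matrix (Fin p × Fin q) (Fin 1) ℂ),
    u = ∑ i, ∑ j, ∑ k, ∑ l, (α 0 (i, k) * β (j, l) 0) • (v i j ⊗ₜ[ℂ] w k l) ∧
    r = matOpNormC α * osV.matNorm v * osW.matNorm w * matOpNormC β}

section StarReps

/-- A `*`-homomorphism of a complex `*`-algebra on some Hilbert space (no contractivity
required). -/
structure StarHomOn (W : Type) [NonUnitalNonAssocSemiring W] [Module ℂ W] [Star W] where
  carrier : Type
  [normedAddCommGroup : NormedAddCommGroup carrier]
  [innerProductSpace : InnerProductSpace ℂ carrier]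
  [completeSpace : CompleteSpace carrier]
  hom : W →⋆ₙₐ[ℂ] (carrier →L[ℂ] carrier)

attribute [instance] StarHomOn.normedAddCommGroup StarHomOn.innerProductSpace
  StarHomOn.completeSpace

/-- A `*`-representation of a Banach `*`-algebra on some Hilbert space: a contractive
`*`-homomorphism into the bounded operators. -/
structure StarRepOn (X : Type) [NonUnitalNonAssocSemiring X] [Module ℂ X] [Star X] [Norm X] where
  carrier : Type
  [normedAddCommGroup : NormedAddCommGroup carrier]
  [innerProductSpace : InnerProductSpace ℂ carrier]
  [completeSpace : CompleteSpace carrier]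
  hom : X →⋆ₙₐ[ℂ] (carrier →L[ℂ] carrier)
  contractive : ∀ x, ‖hom x‖ ≤ ‖x‖

attribute [instance] StarRepOn.normedAddCommGroup StarRepOn.innerProductSpace
  StarRepOn.completeSpace

/-- Topological irreducibility of a `*`-representation: it is nonzero and the only closed
invariant subspaces are `⊥` and `⊤`. -/
def StarRepOn.IsIrreducible {X : Type} [NonUnitalNonAssocSemiring X] [Module ℂ X] [Star X]
    [Norm X] (ρ : StarRepOn X) : Prop :=
  (∃ x, ρ.hom x ≠ 0) ∧
    ∀ U : Submodule ℂ ρ.carrier, IsClosed (U : Set ρ.carrier) →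
      (∀ x : X, ∀ v ∈ U, ρ.hom x v ∈ U) → U = ⊥ ∨ U = ⊤

end StarReps

section BanachStar

variable (X : Type) [NonUnitalNormedRing X] [StarRing X] [NormedSpace ℂ X]

/-- A closed two-sided ideal of `X`. -/
def IsClosedIdeal (I : Submodule ℂ X) : Prop :=
  IsClosed (I : Set X) ∧ (∀ x : X, ∀ y ∈ I, x * y ∈ I) ∧ (∀ x : X, ∀ y ∈ I, y * x ∈ I)

/-- A `*`-ideal: an ideal closed under the involution. -/
def IsStarIdeal (I : Submodule ℂ X) : Prop := ∀ x ∈ I, star x ∈ I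

/-- A primitive ideal of `X`: the kernel of an irreducible `*`-representation of `X` on a
Hilbert space. -/
def IsPrimitiveIdeal (P : Submodule ℂ X) : Prop :=
  ∃ ρ : StarRepOn X, ρ.IsIrreducible ∧ (P : Set X) = {x | ρ.hom x = 0}

/-- The hull of a subset `M` of `X`: all primitive ideals containing `M`. -/
def hullOf (M : Set X) : Set (Submodule ℂ X) := {P | IsPrimitiveIdeal X P ∧ M ⊆ (P : Set X)}

/-- The kernel of a collection of ideals: their intersection. -/
def kernelOf (E : Set (Submodule ℂ X)) : Submodule ℂ X := sInf E

/-- A set of primitive ideals which is closed in the hull-kernel topology: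
`E = h(k(E))`. -/
def IsHkClosed (E : Set (Submodule ℂ X)) : Prop :=
  (∀ P ∈ E, IsPrimitiveIdeal X P) ∧ hullOf X (kernelOf X E : Set X) = E

/-- A (closed) subset `E` of `Prim(X)` is spectral if `k(E)` is the only closed ideal of `X`
whose hull equals `E`. -/
def IsSpectralSet (E : Set (Submodule ℂ X)) : Prop :=
  ∀ J : Submodule ℂ X, IsClosedIdeal X J → hullOf X (J : Set X) = E → J = kernelOf X E

/-- `X` has spectral synthesis if every hull-kernel closed subset of `Prim(X)` is spectral. -/
def HasSpectralSynthesis : Prop :=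
  ∀ E : Set (Submodule ℂ X), IsHkClosed X E → IsSpectralSet X E

/-- The Wiener property: every proper closed two-sided ideal of `X` is annihilated by some
irreducible `*`-representation, i.e. is contained in a primitive ideal. -/
def WienerProperty : Prop :=
  ∀ I : Submodule ℂ X, IsClosedIdeal X I → I ≠ ⊤ → ∃ P, IsPrimitiveIdeal X P ∧ I ≤ P

/-- The topology `τ_w` on the collection of ideals of `X`, generated by the sub-basic open
sets `Z_J = {I : I ⊉ J}` for closed ideals `J`. -/
def tauW : TopologicalSpace (Submodule ℂ X) :=
  .generateFrom {S | ∃ J : Submodule ℂ X, IsClosedIdeal X J ∧ S = {I | ¬ J ≤ I}}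

/-- A (two-sided) bounded approximate identity for an ideal `J` of `X`. -/
def HasBoundedApproxIdentity (J : Submodule ℂ X) : Prop :=
  ∃ (ι : Type) (l : Filter ι) (e : ι → X) (C : ℝ), l.NeBot ∧ (∀ i, e i ∈ J ∧ ‖e i‖ ≤ C) ∧
    ∀ y ∈ J, Filter.Tendsto (fun i => e i * y) l (nhds y) ∧
      Filter.Tendsto (fun i => y * e i) l (nhds y)

/-- A closed prime ideal of `X`: a proper closed ideal `P` such that `I·J ⊆ P` implies
`I ⊆ P` or `J ⊆ P` for closed ideals `I`, `J`. -/
def IsPrimeIdeal (P : Submodule ℂ X) : Prop :=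
  IsClosedIdeal X P ∧ P ≠ ⊤ ∧
    ∀ I J : Submodule ℂ X, IsClosedIdeal X I → IsClosedIdeal X J →
      (∀ x ∈ I, ∀ y ∈ J, x * y ∈ P) → I ≤ P ∨ J ≤ P

/-- The closed ideal generated by products of elements of `J` and `K`. -/
def mulIdeal (J K : Submodule ℂ X) : Submodule ℂ X :=
  (Submodule.span ℂ {z : X | ∃ x ∈ J, ∃ y ∈ K, z = x * y}).topologicalClosure

end BanachStar

section Models

variable (X : Type) [NonUnitalNormedRing X] [StarRing X] [NormedSpace ℂ X]

/-- A realization of a closed `*`-ideal `J` of `X` as a Banach `*`-algebra `Y`: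
an isometric `*`-isomorphism of `Y` onto `J`. -/
structure SubalgebraModel (J : Submodule ℂ X) (Y : Type) [NonUnitalNormedRing Y] [StarRing Y]
    [NormedSpace ℂ Y] where
  incl : Y →⋆ₙₐ[ℂ] X
  isometric : ∀ y, ‖incl y‖ = ‖y‖
  range_eq : Set.range incl = (J : Set X)

/-- A realization of the quotient Banach `*`-algebra `X/J`: a surjective `*`-homomorphism
with kernel `J`, carrying the quotient norm. -/
structure QuotientModel (J : Submodule ℂ X) (Z : Type) [NonUnitalNormedRing Z] [StarRing Z]
    [NormedSpace ℂ Z] where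
  proj : X →⋆ₙₐ[ℂ] Z
  surjective : Function.Surjective proj
  ker_eq : ∀ x, proj x = 0 ↔ x ∈ J
  norm_eq : ∀ x, ‖proj x‖ = Metric.infDist x (J : Set X)

end Models

section CStarTensor

/-- The canonical C*-norm on square matrices over a C*-algebra `A`, described as the
supremum of `‖π v‖` over all `*`-homomorphisms `π` of `M_p(A)` on Hilbert spaces. -/
noncomputable def matCStarNorm {A : Type} [NonUnitalCStarAlgebra A] {p : ℕ}
    (v : Matrix (Fin p) (Fin p) A) : ℝ :=
  sSup {r | ∃ ρ : StarHomOn (Matrix (Fin p) (Fin p) A), r = ‖ρ.hom v‖}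

/-- The operator space projective tensor norm `‖·‖_∧` on the algebraic tensor product
`A ⊗ B` of two C*-algebras. -/
noncomputable def projTensorNorm (A B : Type) [NonUnitalCStarAlgebra A] [NonUnitalCStarAlgebra B]
    (u : A ⊗[ℂ] B) : ℝ :=
  sInf {r | ∃ (p q : ℕ) (α : Matrix (Fin 1) (Fin p × Fin q) ℂ) (v : Matrix (Fin p) (Fin p) A)
    (w : Matrix (Fin q) (Fin q) B) (β : Matrix (Fin p × Fin q) (Fin 1) ℂ),
    u = ∑ i, ∑ j, ∑ k, ∑ l, (α 0 (i, k) * β (j, l) 0) • (v i j ⊗ₜ[ℂ] w k l) ∧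
    r = matOpNormC α * matCStarNorm v * matCStarNorm w * matOpNormC β}

/-- A realization of the operator space projective tensor product `A ⊗̂ B` of two
C*-algebras: a Banach `*`-algebra `X` containing `A ⊗ B` isometrically (for `‖·‖_∧`) and
densely, with multiplication and involution induced by the natural ones. -/
structure OSProjTensorProduct (A B : Type) [NonUnitalCStarAlgebra A] [NonUnitalCStarAlgebra B]
    (X : Type) [NonUnitalNormedRing X] [StarRing X] [NormedSpace ℂ X] [CompleteSpace X] where
  emb : (A ⊗[ℂ] B) →ₗ[ℂ] X
  norm_emb : ∀ u, ‖emb u‖ = projTensorNorm A B u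
  dense_range : DenseRange fun u => emb u
  mul_emb : ∀ (a c : A) (b d : B),
    emb (a ⊗ₜ[ℂ] b) * emb (c ⊗ₜ[ℂ] d) = emb ((a * c) ⊗ₜ[ℂ] (b * d))
  star_emb : ∀ (a : A) (b : B), star (emb (a ⊗ₜ[ℂ] b)) = emb (star a ⊗ₜ[ℂ] star b)

/-- A realization of a C*-tensor norm completion of `A ⊗ B`: a C*-algebra `Y` containing
`A ⊗ B` injectively and densely, with the natural multiplication and involution. -/
structure CStarTensorRealization (A B : Type) [NonUnitalCStarAlgebra A] [NonUnitalCStarAlgebra B]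
    (Y : Type) [NonUnitalCStarAlgebra Y] where
  emb : (A ⊗[ℂ] B) →ₗ[ℂ] Y
  injective : Function.Injective emb
  dense_range : DenseRange fun u => emb u
  mul_emb : ∀ (a c : A) (b d : B),
    emb (a ⊗ₜ[ℂ] b) * emb (c ⊗ₜ[ℂ] d) = emb ((a * c) ⊗ₜ[ℂ] (b * d))
  star_emb : ∀ (a : A) (b : B), star (emb (a ⊗ₜ[ℂ] b)) = emb (star a ⊗ₜ[ℂ] star b)

/-- A realization of the minimal (spatial) C*-tensor product `A ⊗_min B`: a C*-tensor norm
completion of `A ⊗ B` whose norm is minimal among all C*-tensor norms on `A ⊗ B`. -/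
structure MinTensorProduct (A B : Type) [NonUnitalCStarAlgebra A] [NonUnitalCStarAlgebra B]
    (Y : Type) [NonUnitalCStarAlgebra Y] extends CStarTensorRealization A B Y where
  norm_min : ∀ (Z : Type) [NonUnitalCStarAlgebra Z] (r : CStarTensorRealization A B Z)
    (u : A ⊗[ℂ] B), ‖emb u‖ ≤ ‖r.emb u‖

variable {A B : Type} [NonUnitalCStarAlgebra A] [NonUnitalCStarAlgebra B]
variable {X : Type} [NonUnitalNormedRing X] [StarRing X] [NormedSpace ℂ X] [CompleteSpace X]
variable {Y : Type} [NonUnitalCStarAlgebra Y]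

/-- The product ideal `M ⊗̂ N`: the closure in `A ⊗̂ B` of the span of elementary tensors
`a ⊗ b` with `a ∈ M`, `b ∈ N`. -/
noncomputable def prodIdeal (P : OSProjTensorProduct A B X) (M : Submodule ℂ A)
    (N : Submodule ℂ B) : Submodule ℂ X :=
  (Submodule.span ℂ {x : X | ∃ a ∈ M, ∃ b ∈ N, x = P.emb (a ⊗ₜ[ℂ] b)}).topologicalClosure

/-- The closed ideal `Φ(M, N) = A ⊗̂ N + M ⊗̂ B` of `A ⊗̂ B`. -/
noncomputable def PhiIdeal (P : OSProjTensorProduct A B X) (M : Submodule ℂ A)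
    (N : Submodule ℂ B) : Submodule ℂ X :=
  (prodIdeal P ⊤ N ⊔ prodIdeal P M ⊤).topologicalClosure

/-- The lower ideal `J_l` associated with a closed ideal `J` of `A ⊗̂ B`: the closure of the
span of all elementary tensors belonging to `J`. -/
noncomputable def lowerIdeal (P : OSProjTensorProduct A B X) (J : Submodule ℂ X) :
    Submodule ℂ X :=
  (Submodule.span ℂ {x : X | x ∈ J ∧ ∃ (a : A) (b : B), x = P.emb (a ⊗ₜ[ℂ] b)}).topologicalClosure

/-- The upper ideal `J^u = J_min ∩ (A ⊗̂ B)` associated with a closed ideal `J` of `A ⊗̂ B`,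
where `i : A ⊗̂ B → A ⊗_min B` is the canonical inclusion and `J_min` is the closure of
`i(J)` in `A ⊗_min B`. -/
noncomputable def upperIdeal (i : X →L[ℂ] Y) (J : Submodule ℂ X) : Submodule ℂ X :=
  Submodule.comap (i.toLinearMap) ((Submodule.map (i.toLinearMap) J).topologicalClosure)

/-- `i : X → Y` is the canonical `*`-homomorphism `A ⊗̂ B → A ⊗_min B` for the given
realizations: the continuous map which is the identity on the algebraic tensor product. -/
def IsCanonicalInclusion (P : OSProjTensorProduct A B X) (Mn : MinTensorProduct A B Y)
    (i : X →L[ℂ] Y) : Prop :=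
  ∀ u : A ⊗[ℂ] B, i (P.emb u) = Mn.emb u

/-- A closed ideal `J` of `A ⊗̂ B` is spectral if `J_l = J = J^u`. -/
def IsSpectralIdeal (P : OSProjTensorProduct A B X) (i : X →L[ℂ] Y) (J : Submodule ℂ X) :
    Prop :=
  lowerIdeal P J = J ∧ upperIdeal i J = J

/-- The product ideal `M ⊗_min N` inside a realization of `A ⊗_min B`. -/
noncomputable def minProdIdeal (Mn : MinTensorProduct A B Y) (M : Submodule ℂ A)
    (N : Submodule ℂ B) : Submodule ℂ Y :=
  (Submodule.span ℂ {y : Y | ∃ a ∈ M, ∃ b ∈ N, y = Mn.emb (a ⊗ₜ[ℂ] b)}).topologicalClosure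

/-- A realization of the quotient of a C*-algebra `A` by a closed ideal `M`: a surjective
`*`-homomorphism with kernel `M` (for C*-algebras, such a map automatically carries the
quotient norm). -/
structure CStarQuotientModel (A : Type) [NonUnitalCStarAlgebra A] (M : Submodule ℂ A)
    (A' : Type) [NonUnitalCStarAlgebra A'] where
  proj : A →⋆ₙₐ[ℂ] A'
  surjective : Function.Surjective proj
  ker_eq : ∀ a, proj a = 0 ↔ a ∈ M

end CStarTensor

/-- A realization of the Banach `*`-algebra `A ⊗̂_r A`: the operator space projective tensor
product `A ⊗̂ A` equipped with the reverse involution `(a ⊗ b)* = b* ⊗ a*`. -/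
structure OSProjTensorSquareRev (A : Type) [NonUnitalCStarAlgebra A]
    (X : Type) [NonUnitalNormedRing X] [StarRing X] [NormedSpace ℂ X] [CompleteSpace X] where
  emb : (A ⊗[ℂ] A) →ₗ[ℂ] X
  norm_emb : ∀ u, ‖emb u‖ = projTensorNorm A A u
  dense_range : DenseRange fun u => emb u
  mul_emb : ∀ a b c d : A,
    emb (a ⊗ₜ[ℂ] b) * emb (c ⊗ₜ[ℂ] d) = emb ((a * c) ⊗ₜ[ℂ] (b * d))
  star_emb : ∀ a b : A, star (emb (a ⊗ₜ[ℂ] b)) = emb (star b ⊗ₜ[ℂ] star a)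

end

open scoped TensorProduct

/-!
If `W` has a finite basis `(bᵢ)`, every `u ∈ V ⊗ W` is uniquely `∑ uᵢ ⊗ bᵢ`, and `‖u‖_∧` is
equivalent to `maxᵢ ‖uᵢ‖`: the diagonal representation gives `‖∑ aᵢ ⊗ bᵢ‖_∧ ≤ ∑ ‖aᵢ‖ ‖bᵢ‖`, while
Ruan's axioms give `|(φ ⊗ ψ) u| ≤ ‖φ‖ ‖ψ‖ ‖u‖_∧`, which bounds the coefficients. Hence `V ⊗ W` is
complete whenever `V` is, and symmetrically when `V` is finite dimensional.

If both spaces are infinite dimensional, pick unit vectors `aₖ, bₖ` and functionals `φᵢ, ψᵢ` with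
`φᵢ aₖ = 0 = ψᵢ bₖ` for `i < k` and `φₖ aₖ, ψₖ bₖ ≠ 0`. The partial sums of `∑ 2⁻ᵏ aₖ ⊗ bₖ` are
Cauchy. A limit `u` is a sum of some `r` elementary tensors, so every matrix `((φᵢ ⊗ ψⱼ) u)ᵢⱼ` has
rank at most `r`; but by continuity of `φᵢ ⊗ ψⱼ` its `(r + 1) × (r + 1)` corner is the product of a
lower and an upper triangular matrix with nonzero diagonals.
-/

section

open scoped Matrix.Norms.L2Operator Kronecker
open Matrix Filter Topology

namespace Matrix

variable {𝕜 : Type*} [RCLike 𝕜] {l m n p q : Type*} [Fintype l] [Fintype m] [Fintype n]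
  [Fintype p] [Fintype q]

theorem l2_opNorm_le_of_mulVec_le [DecidableEq n] (A : Matrix m n 𝕜) {M : ℝ} (hM : 0 ≤ M)
    (h : ∀ x : EuclideanSpace 𝕜 n, ‖WithLp.toLp 2 (A *ᵥ x)‖ ≤ M * ‖x‖) : ‖A‖ ≤ M := by
  rw [l2_opNorm_def]
  exact ContinuousLinearMap.opNorm_le_bound _ hM h

theorem sum_norm_mulVec_sq_le [DecidableEq n] (A : Matrix m n 𝕜) (x : n → 𝕜) :
    ∑ i, ‖(A *ᵥ x) i‖ ^ 2 ≤ ‖A‖ ^ 2 * ∑ j, ‖x j‖ ^ 2 := by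
  have h := pow_le_pow_left₀ (norm_nonneg _) (A.l2_opNorm_mulVec (WithLp.toLp 2 x)) 2
  simpa [mul_pow, EuclideanSpace.norm_sq_eq] using h

theorem l2_opNorm_kronecker_le [DecidableEq m] [DecidableEq q] (A : Matrix l m 𝕜)
    (B : Matrix p q 𝕜) : ‖A ⊗ₖ B‖ ≤ ‖A‖ * ‖B‖ := by
  refine l2_opNorm_le_of_mulVec_le _ (by positivity) fun x => le_of_sq_le_sq ?_ (by positivity)
  -- `A ⊗ₖ B` acts as `B` on each row `x (j, ·)`, then as `A` on each column of the result
  let z : p → m → 𝕜 := fun k j => (B *ᵥ fun l => x (j, l)) k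
  have hz : ∀ i k, ((A ⊗ₖ B) *ᵥ x) (i, k) = (A *ᵥ z k) i := by
    intro i k
    simp [z, mulVec, dotProduct, Fintype.sum_prod_type, Finset.mul_sum, mul_assoc]
  calc ‖WithLp.toLp 2 ((A ⊗ₖ B) *ᵥ x)‖ ^ 2 = ∑ k, ∑ i, ‖(A *ᵥ z k) i‖ ^ 2 := by
        rw [EuclideanSpace.norm_sq_eq, Fintype.sum_prod_type, Finset.sum_comm]
        simp [hz]
    _ ≤ ∑ k, ‖A‖ ^ 2 * ∑ j, ‖z k j‖ ^ 2 := by gcongr with k; exact sum_norm_mulVec_sq_le _ _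
    _ = ‖A‖ ^ 2 * ∑ j, ∑ k, ‖(B *ᵥ fun l => x (j, l)) k‖ ^ 2 := by
        rw [← Finset.mul_sum, Finset.sum_comm]
    _ ≤ ‖A‖ ^ 2 * ∑ j, ‖B‖ ^ 2 * ∑ l, ‖x (j, l)‖ ^ 2 := by
        gcongr with j; exact sum_norm_mulVec_sq_le _ _
    _ = (‖A‖ * ‖B‖ * ‖x‖) ^ 2 := by
        rw [mul_pow, mul_pow, EuclideanSpace.norm_sq_eq x, Fintype.sum_prod_type, ← Finset.mul_sum,
          mul_assoc]

theorem norm_apply_le_l2_opNorm [DecidableEq n] (A : Matrix m n 𝕜) (i : m) (j : n) :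
    ‖A i j‖ ≤ ‖A‖ := by
  have h1 := PiLp.norm_apply_le (WithLp.toLp 2 (A *ᵥ Pi.single j 1) : EuclideanSpace 𝕜 m) i
  have h2 := A.l2_opNorm_mulVec (EuclideanSpace.single j 1)
  simp only [PiLp.ofLp_single, mulVec_single_one, PiLp.norm_single, norm_one, mul_one] at h1 h2
  exact h1.trans h2

theorem l2_opNorm_replicateCol (x : n → 𝕜) :
    ‖replicateCol (Fin 1) x‖ = ‖(WithLp.toLp 2 x : EuclideanSpace 𝕜 n)‖ := by
  have hAA : (replicateCol (Fin 1) x)ᴴ * replicateCol (Fin 1) x =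
      diagonal fun _ => ((‖(WithLp.toLp 2 x : EuclideanSpace 𝕜 n)‖ ^ 2 : ℝ) : 𝕜) := by
    ext i j
    fin_cases i; fin_cases j
    simp [Matrix.mul_apply, EuclideanSpace.norm_sq_eq, RCLike.conj_mul]
  have h := l2_opNorm_conjTranspose_mul_self (replicateCol (Fin 1) x)
  rw [hAA, l2_opNorm_diagonal, pi_norm_const, RCLike.norm_ofReal, abs_of_nonneg (by positivity),
    ← sq] at h
  exact (sq_eq_sq₀ (norm_nonneg _) (norm_nonneg _)).mp h.symm

theorem l2_opNorm_replicateRow [DecidableEq n] (y : n → 𝕜) :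
    ‖replicateRow (Fin 1) y‖ = ‖(WithLp.toLp 2 y : EuclideanSpace 𝕜 n)‖ := by
  rw [← l2_opNorm_conjTranspose, conjTranspose_replicateRow, l2_opNorm_replicateCol]
  simp [EuclideanSpace.norm_eq]

theorem diagonal_eq_reindex_fromBlocks {d : ℕ} {α : Type*} [Zero α] (z : Fin (d + 1) → α) :
    diagonal z = reindex finSumFinEquiv finSumFinEquiv
      (fromBlocks (diagonal fun i => z (Fin.castAdd 1 i)) 0 0
        (diagonal fun i => z (Fin.natAdd d i))) := by
  rw [fromBlocks_diagonal, reindex_apply, submatrix_diagonal_equiv]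
  congr 1
  ext i
  induction i using Fin.addCases <;> simp

theorem isUnit_mul_of_isLowerTriangular_of_isUpperTriangular {K : Type*} [Field K]
    [LinearOrder n] [DecidableEq n] {L R : Matrix n n K} (hL : L.IsLowerTriangular)
    (hR : R.IsUpperTriangular) (hL0 : ∀ i, L i i ≠ 0) (hR0 : ∀ i, R i i ≠ 0) : IsUnit (L * R) := by
  rw [isUnit_iff_isUnit_det, det_mul, det_of_isLowerTriangular L hL, det_of_isUpperTriangular hR,
    isUnit_iff_ne_zero, ← Finset.prod_mul_distrib, Finset.prod_ne_zero_iff]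
  exact fun i _ => mul_ne_zero (hL0 i) (hR0 i)

end Matrix

theorem matOpNormC_eq_l2_opNorm {m n : Type} [Fintype m] [Fintype n] [DecidableEq n]
    (γ : Matrix m n ℂ) : matOpNormC γ = ‖γ‖ := by
  rw [l2_opNorm_def, ← ContinuousLinearMap.sSup_unitClosedBall_eq_norm, matOpNormC]
  congr 1
  ext r
  simp only [Set.mem_ofPred_eq, Set.mem_image, Metric.mem_closedBall, dist_zero_right]
  constructor
  · rintro ⟨x, hx, rfl⟩
    exact ⟨WithLp.toLp 2 x, by simpa [EuclideanSpace.norm_eq] using hx,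
      by simp [EuclideanSpace.norm_eq, mulVec, dotProduct]⟩
  · rintro ⟨x, hx, rfl⟩
    exact ⟨x.ofLp, by simpa [EuclideanSpace.norm_eq] using hx,
      by simp [EuclideanSpace.norm_eq, mulVec, dotProduct]⟩

namespace OperatorSpaceStructure

variable {V : Type} [NormedAddCommGroup V] [NormedSpace ℂ V] (osV : OperatorSpaceStructure V)

theorem matNorm_zero {p : ℕ} : osV.matNorm (0 : Matrix (Fin p) (Fin p) V) = 0 :=
  (osV.matNorm_eq_zero_iff 0).mpr rfl

theorem matNorm_nonneg {p : ℕ} (v : Matrix (Fin p) (Fin p) V) : 0 ≤ osV.matNorm v := by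
  have h := osV.matNorm_add_le v ((-1 : ℂ) • v)
  rw [osV.matNorm_smul, show v + (-1 : ℂ) • v = 0 by simp, matNorm_zero] at h
  simp only [norm_neg, norm_one, one_mul] at h
  linarith

theorem matNorm_diagonal_le {d : ℕ} (z : Fin d → V) {C : ℝ} (hC : 0 ≤ C)
    (hz : ∀ i, ‖z i‖ ≤ C) : osV.matNorm (diagonal z) ≤ C := by
  induction d with
  | zero => rwa [Subsingleton.elim (diagonal z) 0, matNorm_zero]
  | succ d ih =>
    rw [diagonal_eq_reindex_fromBlocks, osV.matNorm_dirSum]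
    refine max_le (ih _ fun i => hz _) ?_
    rw [osV.matNorm_one]
    simpa using hz _

theorem norm_sum_smul_le {p : ℕ} (v : Matrix (Fin p) (Fin p) V) (y x : EuclideanSpace ℂ (Fin p)) :
    ‖∑ k, ∑ l, (y k * x l) • v k l‖ ≤ ‖y‖ * osV.matNorm v * ‖x‖ := by
  have h := osV.matNorm_comp_le (replicateRow (Fin 1) y.ofLp) v (replicateCol (Fin 1) x.ofLp)
  rwa [osV.matNorm_one, matOpNormC_eq_l2_opNorm, matOpNormC_eq_l2_opNorm,
    l2_opNorm_replicateRow, l2_opNorm_replicateCol] at h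

theorem l2_opNorm_map_le {p : ℕ} (v : Matrix (Fin p) (Fin p) V) (φ : StrongDual ℂ V) :
    ‖v.map φ‖ ≤ ‖φ‖ * osV.matNorm v := by
  refine l2_opNorm_le_of_mulVec_le _ (by positivity [osV.matNorm_nonneg v]) fun x => ?_
  set z : EuclideanSpace ℂ (Fin p) := WithLp.toLp 2 (v.map φ *ᵥ x)
  set y : EuclideanSpace ℂ (Fin p) := WithLp.toLp 2 (star z.ofLp)
  have hy : ‖y‖ = ‖z‖ := by simp [y, EuclideanSpace.norm_eq]
  -- `‖z‖² = ∑ z̄ₖ zₖ = φ (z̄ v x)`, and Ruan's axiom bounds `‖z̄ v x‖` by `‖z‖ ‖v‖ ‖x‖`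
  have hz : ((‖z‖ ^ 2 : ℝ) : ℂ) = φ (∑ k, ∑ l, (y k * x l) • v k l) := by
    rw [EuclideanSpace.norm_sq_eq, Complex.ofReal_sum, map_sum]
    refine Finset.sum_congr rfl fun k _ => ?_
    rw [Complex.ofReal_pow, ← Complex.conj_mul', map_sum]
    simp only [y, z, Pi.star_apply, Complex.star_def, mulVec, dotProduct, map_apply,
      Finset.mul_sum, map_smul, smul_eq_mul]
    exact Finset.sum_congr rfl fun l _ => by ring
  have hsq : ‖z‖ * ‖z‖ ≤ ‖z‖ * (‖φ‖ * osV.matNorm v * ‖x‖) :=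
    calc ‖z‖ * ‖z‖ = ‖φ (∑ k, ∑ l, (y k * x l) • v k l)‖ := by
          rw [← sq, ← hz, Complex.norm_real, Real.norm_of_nonneg (by positivity)]
      _ ≤ ‖φ‖ * (‖y‖ * osV.matNorm v * ‖x‖) := φ.le_opNorm_of_le (osV.norm_sum_smul_le v y x)
      _ = ‖z‖ * (‖φ‖ * osV.matNorm v * ‖x‖) := by rw [hy]; ring
  rcases (norm_nonneg z).eq_or_lt with h0 | hpos
  · rw [← h0]; positivity [osV.matNorm_nonneg v]
  · exact le_of_mul_le_mul_left hsq hpos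

end OperatorSpaceStructure

theorem TensorProduct.exists_fin_sum_tmul {R M N : Type*} [CommSemiring R] [AddCommMonoid M]
    [AddCommMonoid N] [Module R M] [Module R N] (x : M ⊗[R] N) :
    ∃ (n : ℕ) (a : Fin n → M) (b : Fin n → N), x = ∑ i, a i ⊗ₜ[R] b i := by
  obtain ⟨s, rfl⟩ := TensorProduct.exists_finset x
  refine ⟨s.card, fun i => (s.equivFin.symm i).1.1, fun i => (s.equivFin.symm i).1.2, ?_⟩
  rw [← Finset.sum_coe_sort s]
  exact (Fintype.sum_equiv s.equivFin _ _ fun _ => by simp)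

theorem TensorProduct.exists_rank_dualDistrib_le {K V W : Type*} [Field K] [AddCommGroup V]
    [Module K V] [AddCommGroup W] [Module K W] (u : V ⊗[K] W) :
    ∃ r : ℕ, ∀ (n : ℕ) (φ : Fin n → Module.Dual K V) (ψ : Fin n → Module.Dual K W),
      (Matrix.of fun i j => dualDistrib K V W (φ i ⊗ₜ ψ j) u).rank ≤ r := by
  obtain ⟨s, rfl⟩ := TensorProduct.exists_finset u
  refine ⟨s.card, fun n φ ψ => ?_⟩
  have hPQ : (Matrix.of fun i j => dualDistrib K V W (φ i ⊗ₜ ψ j) (∑ t ∈ s, t.1 ⊗ₜ t.2)) =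
      (Matrix.of fun i (t : s) => φ i t.1.1) * Matrix.of fun (t : s) j => ψ j t.1.2 := by
    ext i j
    simp only [of_apply, mul_apply, map_sum, dualDistrib_apply]
    exact (Finset.sum_coe_sort s fun t => φ i t.1 * ψ j t.2).symm
  rw [hPQ]
  exact (rank_mul_le_left _ _).trans ((rank_le_card_width _).trans_eq (Fintype.card_coe s))

section Gauge

variable {X : Type*} [AddGroup X]

-- Sequential completeness for a gauge `ρ` that need not be a norm: the argument never uses the
-- triangle inequality for `osProjNorm`.
def IsCauchyWrt (ρ : X → ℝ) (f : ℕ → X) : Prop :=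
  ∀ ε : ℝ, 0 < ε → ∃ N : ℕ, ∀ m ≥ N, ∀ n ≥ N, ρ (f m - f n) < ε

def TendstoWrt (ρ : X → ℝ) (f : ℕ → X) (u : X) : Prop :=
  ∀ ε : ℝ, 0 < ε → ∃ N : ℕ, ∀ n ≥ N, ρ (f n - u) < ε

def IsCompleteWrt (ρ : X → ℝ) : Prop :=
  ∀ f : ℕ → X, IsCauchyWrt ρ f → ∃ u, TendstoWrt ρ f u

theorem mul_div_add_one_lt {c ε : ℝ} (hc : 0 ≤ c) (hε : 0 < ε) : c * (ε / (c + 1)) < ε := by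
  rw [mul_div_assoc', div_lt_iff₀ (by positivity)]
  nlinarith

theorem IsCompleteWrt.of_addEquiv {Y : Type*} [NormedAddCommGroup Y] [CompleteSpace Y]
    {ρ : X → ℝ} (T : X ≃+ Y) {c C : ℝ} (hc : 0 ≤ c) (hC : 0 ≤ C) (hT : ∀ x, ‖T x‖ ≤ c * ρ x)
    (hT_symm : ∀ y, ρ (T.symm y) ≤ C * ‖y‖) : IsCompleteWrt ρ := by
  intro f hf
  have hTf : CauchySeq (T ∘ f) := by
    refine Metric.cauchySeq_iff.mpr fun ε hε => ?_
    obtain ⟨N, hN⟩ := hf (ε / (c + 1)) (by positivity)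
    refine ⟨N, fun m hm n hn => ?_⟩
    calc dist (T (f m)) (T (f n)) = ‖T (f m - f n)‖ := by rw [dist_eq_norm, map_sub]
      _ ≤ c * (ε / (c + 1)) := (hT _).trans (by gcongr; exact (hN m hm n hn).le)
      _ < ε := mul_div_add_one_lt hc hε
  obtain ⟨y, hy⟩ := cauchySeq_tendsto_of_complete hTf
  refine ⟨T.symm y, fun ε hε => ?_⟩
  obtain ⟨N, hN⟩ := Metric.tendsto_atTop.mp hy (ε / (C + 1)) (by positivity)
  refine ⟨N, fun n hn => ?_⟩
  calc ρ (f n - T.symm y) = ρ (T.symm (T (f n) - y)) := by rw [map_sub, T.symm_apply_apply]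
    _ ≤ C * (ε / (C + 1)) := (hT_symm _).trans (by gcongr; rw [← dist_eq_norm]; exact (hN n hn).le)
    _ < ε := mul_div_add_one_lt hC hε

end Gauge

section Triangular

variable {𝕜 E : Type*} [RCLike 𝕜] [NormedAddCommGroup E] [NormedSpace 𝕜 E]

theorem norm_smul_inv_norm_le_one (x : E) : ‖(‖x‖ : 𝕜)⁻¹ • x‖ ≤ 1 := by
  rcases eq_or_ne x 0 with rfl | hx
  · simp
  · exact (norm_smul_inv_norm hx).le

theorem exists_linearIndependent_strongDual (hE : ¬FiniteDimensional 𝕜 E) :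
    ∃ φ : ℕ → StrongDual 𝕜 E, LinearIndependent 𝕜 φ := by
  have hdual : ¬FiniteDimensional 𝕜 (StrongDual 𝕜 E) := fun h =>
    hE (.of_injective (NormedSpace.inclusionInDoubleDualLi 𝕜).toLinearMap
      (NormedSpace.inclusionInDoubleDualLi 𝕜).injective)
  let B := Module.Basis.ofVectorSpace 𝕜 (StrongDual 𝕜 E)
  have hinf : (Module.Basis.ofVectorSpaceIndex 𝕜 (StrongDual 𝕜 E)).Infinite := fun hfin =>
    have := hfin.to_subtype
    hdual (Module.Finite.of_basis B)
  exact ⟨fun n => B (hinf.natEmbedding _ n),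
    B.linearIndependent.comp _ (hinf.natEmbedding _).injective⟩

theorem exists_triangular_system (hE : ¬FiniteDimensional 𝕜 E) :
    ∃ (a : ℕ → E) (φ : ℕ → StrongDual 𝕜 E), (∀ k, ‖a k‖ ≤ 1) ∧
      (∀ i k, i < k → φ i (a k) = 0) ∧ ∀ k, φ k (a k) ≠ 0 := by
  obtain ⟨φ, hφ⟩ := exists_linearIndependent_strongDual hE
  have hφ' : LinearIndependent 𝕜 fun k => (φ k : E →ₗ[𝕜] 𝕜) :=
    hφ.map' (ContinuousLinearMap.coeLM 𝕜)
      (LinearMap.ker_eq_bot.mpr ContinuousLinearMap.coe_injective)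
  -- `φ k` is not a combination of the earlier `φ i`, so it does not vanish on their common kernel
  have hx : ∀ k, ∃ x : E, (∀ i < k, φ i x = 0) ∧ φ k x ≠ 0 := by
    intro k
    by_contra! h
    have hker : ⨅ i : Set.Iio k, LinearMap.ker (φ i : E →ₗ[𝕜] 𝕜) ≤
        LinearMap.ker (φ k : E →ₗ[𝕜] 𝕜) :=
      fun x hx => by simpa using h x fun i hi => by simpa using (Submodule.mem_iInf _).mp hx ⟨i, hi⟩
    refine hφ'.notMem_span_image (s := Set.Iio k) (lt_irrefl k) ?_
    rw [Set.image_eq_range]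
    exact mem_span_of_iInf_ker_le_ker hker
  choose x hx_lt hx_self using hx
  have hx0 : ∀ k, x k ≠ 0 := fun k h => hx_self k (by simp [h])
  refine ⟨fun k => (‖x k‖ : 𝕜)⁻¹ • x k, φ, fun k => norm_smul_inv_norm_le_one (x k),
    fun i k hik => by simp [hx_lt k i hik], fun k => ?_⟩
  simp [hx_self k, hx0 k]

end Triangular

section ProjectiveNorm

variable {V W : Type} [NormedAddCommGroup V] [NormedSpace ℂ V] [NormedAddCommGroup W]
  [NormedSpace ℂ W]

/-- The tensor `α (v ⊗ w) β` of the definition of `osProjNorm`. -/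
def sandwichTmul {p q : ℕ} (α : Matrix (Fin 1) (Fin p × Fin q) ℂ) (v : Matrix (Fin p) (Fin p) V)
    (w : Matrix (Fin q) (Fin q) W) (β : Matrix (Fin p × Fin q) (Fin 1) ℂ) : V ⊗[ℂ] W :=
  ∑ i, ∑ j, ∑ k, ∑ l, (α 0 (i, k) * β (j, l) 0) • (v i j ⊗ₜ[ℂ] w k l)

theorem sandwichTmul_diagonal {d : ℕ} (s : Fin d → ℂ) (a : Fin d → V) (b : Fin d → W) :
    sandwichTmul (replicateRow (Fin 1) fun ik => if ik.1 = ik.2 then s ik.1 else 0)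
      (diagonal a) (diagonal b) (replicateCol (Fin 1) fun ik => if ik.1 = ik.2 then s ik.1 else 0) =
      ∑ i, (s i * s i) • (a i ⊗ₜ[ℂ] b i) := by
  simp [sandwichTmul, diagonal_apply, ite_mul, ite_smul, Finset.sum_ite_eq,
    TensorProduct.ite_tmul, TensorProduct.tmul_ite]

def dualTmul (φ : StrongDual ℂ V) (ψ : StrongDual ℂ W) : Module.Dual ℂ (V ⊗[ℂ] W) :=
  TensorProduct.dualDistrib ℂ V W ((φ : Module.Dual ℂ V) ⊗ₜ (ψ : Module.Dual ℂ W))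

@[simp]
theorem dualTmul_tmul (φ : StrongDual ℂ V) (ψ : StrongDual ℂ W) (a : V) (b : W) :
    dualTmul φ ψ (a ⊗ₜ b) = φ a * ψ b :=
  rfl

variable (osV : OperatorSpaceStructure V) (osW : OperatorSpaceStructure W)

theorem osProjNorm_le_of_eq_sandwichTmul {u : V ⊗[ℂ] W} {p q : ℕ}
    {α : Matrix (Fin 1) (Fin p × Fin q) ℂ} {v : Matrix (Fin p) (Fin p) V}
    {w : Matrix (Fin q) (Fin q) W} {β : Matrix (Fin p × Fin q) (Fin 1) ℂ}
    (h : u = sandwichTmul α v w β) :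
    osProjNorm osV osW u ≤ ‖α‖ * osV.matNorm v * osW.matNorm w * ‖β‖ := by
  refine csInf_le ⟨0, ?_⟩
    ⟨p, q, α, v, w, β, h, by rw [matOpNormC_eq_l2_opNorm, matOpNormC_eq_l2_opNorm]⟩
  rintro r ⟨p, q, α, v, w, β, -, rfl⟩
  rw [matOpNormC_eq_l2_opNorm, matOpNormC_eq_l2_opNorm]
  positivity [osV.matNorm_nonneg v, osW.matNorm_nonneg w]

theorem ofReal_norm_mul_norm_smul_tmul (a : V) (b : W) :
    ((‖a‖ * ‖b‖ : ℝ) : ℂ) • (((‖a‖ : ℂ)⁻¹ • a) ⊗ₜ[ℂ] ((‖b‖ : ℂ)⁻¹ • b)) = a ⊗ₜ[ℂ] b := by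
  rcases eq_or_ne a 0 with rfl | ha
  · simp
  rcases eq_or_ne b 0 with rfl | hb
  · simp
  have h1 : ((‖a‖ * ‖b‖ : ℝ) : ℂ) * ((‖a‖ : ℂ)⁻¹ * (‖b‖ : ℂ)⁻¹) = 1 := by
    push_cast
    field_simp [ha, hb]
  rw [TensorProduct.smul_tmul_smul, smul_smul, h1, one_smul]

theorem exists_sandwichTmul_eq_sum_tmul {d : ℕ} (a : Fin d → V) (b : Fin d → W) :
    ∃ (p q : ℕ) (α : Matrix (Fin 1) (Fin p × Fin q) ℂ) (v : Matrix (Fin p) (Fin p) V)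
      (w : Matrix (Fin q) (Fin q) W) (β : Matrix (Fin p × Fin q) (Fin 1) ℂ),
      ∑ i, a i ⊗ₜ[ℂ] b i = sandwichTmul α v w β ∧
        ‖α‖ * osV.matNorm v * osW.matNorm w * ‖β‖ ≤ ∑ i, ‖a i‖ * ‖b i‖ := by
  set S := ∑ i, ‖a i‖ * ‖b i‖
  -- `∑ aᵢ ⊗ bᵢ = α (diag(aᵢ/‖aᵢ‖) ⊗ diag(bᵢ/‖bᵢ‖)) αᵀ` with `α_{(i,i)} = √(‖aᵢ‖ ‖bᵢ‖)`
  set e : Fin d × Fin d → ℂ := fun ik => if ik.1 = ik.2 then (√(‖a ik.1‖ * ‖b ik.1‖) : ℂ) else 0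
  have he : ‖(WithLp.toLp 2 e : EuclideanSpace ℂ (Fin d × Fin d))‖ = √S := by
    rw [EuclideanSpace.norm_eq]
    congr 1
    simp [e, Fintype.sum_prod_type, apply_ite, Finset.sum_ite_eq, S, mul_pow]
  refine ⟨d, d, replicateRow (Fin 1) e, diagonal fun i => (‖a i‖ : ℂ)⁻¹ • a i,
    diagonal fun i => (‖b i‖ : ℂ)⁻¹ • b i, replicateCol (Fin 1) e, ?_, ?_⟩
  · rw [sandwichTmul_diagonal (fun i => (√(‖a i‖ * ‖b i‖) : ℂ))]
    refine Finset.sum_congr rfl fun i _ => ?_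
    rw [← Complex.ofReal_mul, Real.mul_self_sqrt (by positivity), ofReal_norm_mul_norm_smul_tmul]
  · have hv : osV.matNorm (diagonal fun i => (‖a i‖ : ℂ)⁻¹ • a i) ≤ 1 :=
      osV.matNorm_diagonal_le _ zero_le_one fun i => norm_smul_inv_norm_le_one (a i)
    have hw : osW.matNorm (diagonal fun i => (‖b i‖ : ℂ)⁻¹ • b i) ≤ 1 :=
      osW.matNorm_diagonal_le _ zero_le_one fun i => norm_smul_inv_norm_le_one (b i)
    calc _ ≤ √S * 1 * 1 * √S := by
          rw [l2_opNorm_replicateRow, l2_opNorm_replicateCol, he]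
          gcongr
          exact osW.matNorm_nonneg _
      _ = S := by rw [mul_one, mul_one, Real.mul_self_sqrt (by positivity)]

theorem exists_sandwichTmul_eq (u : V ⊗[ℂ] W) :
    ∃ (p q : ℕ) (α : Matrix (Fin 1) (Fin p × Fin q) ℂ) (v : Matrix (Fin p) (Fin p) V)
      (w : Matrix (Fin q) (Fin q) W) (β : Matrix (Fin p × Fin q) (Fin 1) ℂ),
      u = sandwichTmul α v w β := by
  obtain ⟨n, a, b, rfl⟩ := TensorProduct.exists_fin_sum_tmul u
  exact ⟨n, n, _, diagonal a, diagonal b, _, by rw [sandwichTmul_diagonal fun _ => 1]; simp⟩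

theorem osProjNorm_sum_tmul_le {ι : Type*} (s : Finset ι) (a : ι → V) (b : ι → W) :
    osProjNorm osV osW (∑ i ∈ s, a i ⊗ₜ[ℂ] b i) ≤ ∑ i ∈ s, ‖a i‖ * ‖b i‖ := by
  have hsum : ∀ {M : Type} [AddCommMonoid M] (g : ι → M),
      ∑ j, g (s.equivFin.symm j) = ∑ i ∈ s, g i := fun g => by
    rw [← Finset.sum_coe_sort s]
    exact Fintype.sum_equiv s.equivFin.symm _ _ fun _ => rfl
  obtain ⟨p, q, α, v, w, β, h, hle⟩ := exists_sandwichTmul_eq_sum_tmul osV osW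
    (fun j => a (s.equivFin.symm j)) (fun j => b (s.equivFin.symm j))
  rw [hsum fun i => a i ⊗ₜ[ℂ] b i] at h
  rw [hsum fun i => ‖a i‖ * ‖b i‖] at hle
  exact (osProjNorm_le_of_eq_sandwichTmul osV osW h).trans hle

theorem le_mul_osProjNorm {u : V ⊗[ℂ] W} {c K : ℝ} (hK : 0 ≤ K)
    (h : ∀ (p q : ℕ) (α : Matrix (Fin 1) (Fin p × Fin q) ℂ) (v : Matrix (Fin p) (Fin p) V)
      (w : Matrix (Fin q) (Fin q) W) (β : Matrix (Fin p × Fin q) (Fin 1) ℂ),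
      u = sandwichTmul α v w β → c ≤ K * (‖α‖ * osV.matNorm v * osW.matNorm w * ‖β‖)) :
    c ≤ K * osProjNorm osV osW u := by
  rw [osProjNorm, ← smul_eq_mul, ← Real.sInf_smul_of_nonneg hK]
  obtain ⟨p, q, α, v, w, β, hu⟩ := exists_sandwichTmul_eq u
  refine le_csInf ⟨_, Set.smul_mem_smul_set ⟨p, q, α, v, w, β, hu, rfl⟩⟩ ?_
  rintro - ⟨r, ⟨p, q, α, v, w, β, hu, rfl⟩, rfl⟩
  rw [matOpNormC_eq_l2_opNorm, matOpNormC_eq_l2_opNorm]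
  exact h p q α v w β hu

theorem osProjNorm_nonneg (u : V ⊗[ℂ] W) : 0 ≤ osProjNorm osV osW u := by
  simpa using le_mul_osProjNorm osV osW zero_le_one fun p q α v w β _ => by
    positivity [osV.matNorm_nonneg v, osW.matNorm_nonneg w]

theorem dualTmul_sandwichTmul {p q : ℕ} (φ : StrongDual ℂ V) (ψ : StrongDual ℂ W)
    (α : Matrix (Fin 1) (Fin p × Fin q) ℂ) (v : Matrix (Fin p) (Fin p) V)
    (w : Matrix (Fin q) (Fin q) W) (β : Matrix (Fin p × Fin q) (Fin 1) ℂ) :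
    dualTmul φ ψ (sandwichTmul α v w β) = (α * (v.map φ ⊗ₖ w.map ψ) * β) 0 0 := by
  simp only [sandwichTmul, map_sum, map_smul, dualTmul_tmul, smul_eq_mul, mul_apply,
    Fintype.sum_prod_type, Finset.sum_mul, kroneckerMap_apply, map_apply]
  rw [Finset.sum_comm]
  refine Finset.sum_congr rfl fun j _ => ?_
  conv_rhs => rw [Finset.sum_comm]
  refine Finset.sum_congr rfl fun i _ => ?_
  conv_rhs => rw [Finset.sum_comm]
  exact Finset.sum_congr rfl fun k _ => Finset.sum_congr rfl fun l _ => by ring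

theorem norm_dualTmul_le (φ : StrongDual ℂ V) (ψ : StrongDual ℂ W) (u : V ⊗[ℂ] W) :
    ‖dualTmul φ ψ u‖ ≤ ‖φ‖ * ‖ψ‖ * osProjNorm osV osW u := by
  refine le_mul_osProjNorm osV osW (by positivity) fun p q α v w β hu => ?_
  rw [hu, dualTmul_sandwichTmul]
  calc _ ≤ ‖α * (v.map φ ⊗ₖ w.map ψ) * β‖ := norm_apply_le_l2_opNorm _ _ _
    _ ≤ ‖α‖ * (‖v.map φ‖ * ‖w.map ψ‖) * ‖β‖ := by
        grw [l2_opNorm_mul, l2_opNorm_mul, l2_opNorm_kronecker_le]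
    _ ≤ ‖α‖ * ((‖φ‖ * osV.matNorm v) * (‖ψ‖ * osW.matNorm w)) * ‖β‖ := by
        have hv := osV.matNorm_nonneg v
        grw [osV.l2_opNorm_map_le, osW.l2_opNorm_map_le]
    _ = ‖φ‖ * ‖ψ‖ * (‖α‖ * osV.matNorm v * osW.matNorm w * ‖β‖) := by ring

theorem norm_rid_lTensor_le (ψ : StrongDual ℂ W) (x : V ⊗[ℂ] W) :
    ‖TensorProduct.rid ℂ V ((ψ : W →ₗ[ℂ] ℂ).lTensor V x)‖ ≤ ‖ψ‖ * osProjNorm osV osW x := by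
  refine NormedSpace.norm_le_dual_bound ℂ _ (by positivity [osProjNorm_nonneg osV osW x])
    fun φ => ?_
  have h : φ (TensorProduct.rid ℂ V ((ψ : W →ₗ[ℂ] ℂ).lTensor V x)) = dualTmul φ ψ x := by
    induction x using TensorProduct.induction_on <;> simp_all [mul_comm]
  rw [h]
  exact (norm_dualTmul_le osV osW φ ψ x).trans_eq (by ring)

theorem norm_lid_rTensor_le (φ : StrongDual ℂ V) (x : V ⊗[ℂ] W) :
    ‖TensorProduct.lid ℂ W ((φ : V →ₗ[ℂ] ℂ).rTensor W x)‖ ≤ ‖φ‖ * osProjNorm osV osW x := by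
  refine NormedSpace.norm_le_dual_bound ℂ _ (by positivity [osProjNorm_nonneg osV osW x])
    fun ψ => ?_
  have h : ψ (TensorProduct.lid ℂ W ((φ : V →ₗ[ℂ] ℂ).rTensor W x)) = dualTmul φ ψ x := by
    induction x using TensorProduct.induction_on <;> simp_all
  rw [h]
  exact (norm_dualTmul_le osV osW φ ψ x).trans_eq (by ring)

theorem isCompleteWrt_osProjNorm_of_finiteDimensional_right [CompleteSpace V]
    [FiniteDimensional ℂ W] : IsCompleteWrt (osProjNorm osV osW) := by
  let b := Module.finBasis ℂ W
  let ψ : Fin (Module.finrank ℂ W) → StrongDual ℂ W := fun i => (b.coord i).toContinuousLinearMap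
  let T := (TensorProduct.equivFinsuppOfBasisRight (M := V) b).trans
    (Finsupp.linearEquivFunOnFinite ℂ V (Fin (Module.finrank ℂ W)))
  refine IsCompleteWrt.of_addEquiv T.toAddEquiv (c := ∑ i, ‖ψ i‖) (C := ∑ i, ‖b i‖)
    (by positivity) (by positivity) (fun x => ?_) (fun y => ?_)
  · refine (pi_norm_le_iff_of_nonneg (by positivity [osProjNorm_nonneg osV osW x])).mpr fun i => ?_
    calc ‖T x i‖ ≤ ‖ψ i‖ * osProjNorm osV osW x := by
          convert norm_rid_lTensor_le osV osW (ψ i) x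
          exact TensorProduct.equivFinsuppOfBasisRight_apply b x i
      _ ≤ (∑ j, ‖ψ j‖) * osProjNorm osV osW x := by
          gcongr
          · exact osProjNorm_nonneg osV osW x
          · exact Finset.single_le_sum (fun j _ => norm_nonneg (ψ j)) (Finset.mem_univ i)
  · have hy : T.symm y = ∑ i, y i ⊗ₜ[ℂ] b i := by
      simp [T, Finsupp.sum_fintype]
    calc osProjNorm osV osW (T.symm y) ≤ ∑ i, ‖y i‖ * ‖b i‖ := by
          rw [hy]; exact osProjNorm_sum_tmul_le osV osW _ _ _
      _ ≤ ∑ i, ‖y‖ * ‖b i‖ := by gcongr with i; exact norm_le_pi_norm y i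
      _ = (∑ i, ‖b i‖) * ‖y‖ := by rw [← Finset.mul_sum, mul_comm]

theorem isCompleteWrt_osProjNorm_of_finiteDimensional_left [FiniteDimensional ℂ V]
    [CompleteSpace W] : IsCompleteWrt (osProjNorm osV osW) := by
  let b := Module.finBasis ℂ V
  let φ : Fin (Module.finrank ℂ V) → StrongDual ℂ V := fun i => (b.coord i).toContinuousLinearMap
  let T := (TensorProduct.equivFinsuppOfBasisLeft (N := W) b).trans
    (Finsupp.linearEquivFunOnFinite ℂ W (Fin (Module.finrank ℂ V)))
  refine IsCompleteWrt.of_addEquiv T.toAddEquiv (c := ∑ i, ‖φ i‖) (C := ∑ i, ‖b i‖)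
    (by positivity) (by positivity) (fun x => ?_) (fun y => ?_)
  · refine (pi_norm_le_iff_of_nonneg (by positivity [osProjNorm_nonneg osV osW x])).mpr fun i => ?_
    calc ‖T x i‖ ≤ ‖φ i‖ * osProjNorm osV osW x := by
          convert norm_lid_rTensor_le osV osW (φ i) x
          exact TensorProduct.equivFinsuppOfBasisLeft_apply b x i
      _ ≤ (∑ j, ‖φ j‖) * osProjNorm osV osW x := by
          gcongr
          · exact osProjNorm_nonneg osV osW x
          · exact Finset.single_le_sum (fun j _ => norm_nonneg (φ j)) (Finset.mem_univ i)
  · have hy : T.symm y = ∑ i, b i ⊗ₜ[ℂ] y i := by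
      simp [T, Finsupp.sum_fintype]
    calc osProjNorm osV osW (T.symm y) ≤ ∑ i, ‖b i‖ * ‖y i‖ := by
          rw [hy]; exact osProjNorm_sum_tmul_le osV osW _ _ _
      _ ≤ ∑ i, ‖b i‖ * ‖y‖ := by gcongr with i; exact norm_le_pi_norm y i
      _ = (∑ i, ‖b i‖) * ‖y‖ := by rw [← Finset.sum_mul]

theorem isCauchyWrt_osProjNorm_sum_range_tmul (x : ℕ → V) (y : ℕ → W)
    (h : Summable fun k => ‖x k‖ * ‖y k‖) :
    IsCauchyWrt (osProjNorm osV osW) fun n => ∑ k ∈ Finset.range n, x k ⊗ₜ[ℂ] y k := by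
  set f : ℕ → V ⊗[ℂ] W := fun n => ∑ k ∈ Finset.range n, x k ⊗ₜ[ℂ] y k
  set S : ℕ → ℝ := fun n => ∑ k ∈ Finset.range n, ‖x k‖ * ‖y k‖
  have hbound : ∀ n m, n ≤ m → osProjNorm osV osW (f m - f n) ≤ dist (S m) (S n) ∧
      osProjNorm osV osW (f n - f m) ≤ dist (S m) (S n) := by
    intro n m hnm
    have hS : dist (S m) (S n) = ∑ k ∈ Finset.Ico n m, ‖x k‖ * ‖y k‖ := by
      rw [Real.dist_eq, ← Finset.sum_Ico_eq_sub _ hnm, abs_of_nonneg (by positivity)]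
    have hfmn : f m - f n = ∑ k ∈ Finset.Ico n m, x k ⊗ₜ[ℂ] y k :=
      (Finset.sum_Ico_eq_sub _ hnm).symm
    have hfnm : f n - f m = ∑ k ∈ Finset.Ico n m, (-x k) ⊗ₜ[ℂ] y k := by
      rw [← neg_sub, hfmn, ← Finset.sum_neg_distrib]
      simp only [TensorProduct.neg_tmul]
    rw [hS, hfmn, hfnm]
    exact ⟨osProjNorm_sum_tmul_le osV osW _ _ _,
      (osProjNorm_sum_tmul_le osV osW _ _ _).trans_eq (by simp)⟩
  intro ε hε
  obtain ⟨N, hN⟩ := Metric.cauchySeq_iff.mp h.hasSum.tendsto_sum_nat.cauchySeq ε hε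
  refine ⟨N, fun m hm n hn => ?_⟩
  rcases le_total n m with hnm | hmn
  · exact (hbound n m hnm).1.trans_lt (hN m hm n hn)
  · exact (hbound m n hmn).2.trans_lt (hN n hn m hm)

theorem tendsto_dualTmul_of_tendstoWrt (φ : StrongDual ℂ V) (ψ : StrongDual ℂ W)
    {f : ℕ → V ⊗[ℂ] W} {u : V ⊗[ℂ] W} (hf : TendstoWrt (osProjNorm osV osW) f u) :
    Tendsto (fun n => dualTmul φ ψ (f n)) atTop (𝓝 (dualTmul φ ψ u)) := by
  refine Metric.tendsto_atTop.mpr fun ε hε => ?_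
  obtain ⟨N, hN⟩ := hf (ε / (‖φ‖ * ‖ψ‖ + 1)) (by positivity)
  refine ⟨N, fun n hn => ?_⟩
  rw [dist_eq_norm, ← map_sub]
  calc _ ≤ ‖φ‖ * ‖ψ‖ * osProjNorm osV osW (f n - u) := norm_dualTmul_le osV osW φ ψ _
    _ ≤ ‖φ‖ * ‖ψ‖ * (ε / (‖φ‖ * ‖ψ‖ + 1)) := by gcongr; exact (hN n hn).le
    _ < ε := mul_div_add_one_lt (by positivity) hε

theorem dualTmul_eq_of_tendstoWrt_sum_range_tmul (x : ℕ → V) (y : ℕ → W)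
    (φ : ℕ → StrongDual ℂ V) (hφ : ∀ i k, i < k → φ i (x k) = 0) (ψ : StrongDual ℂ W)
    {u : V ⊗[ℂ] W}
    (hu : TendstoWrt (osProjNorm osV osW) (fun n => ∑ k ∈ Finset.range n, x k ⊗ₜ[ℂ] y k) u)
    {i m : ℕ} (him : i < m) : dualTmul (φ i) ψ u = ∑ k ∈ Finset.range m, φ i (x k) * ψ (y k) := by
  refine tendsto_nhds_unique (tendsto_dualTmul_of_tendstoWrt osV osW _ _ hu)
    (tendsto_const_nhds.congr' (eventually_atTop.mpr ⟨m, fun n hn => ?_⟩))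
  simp only [map_sum, dualTmul_tmul]
  refine Finset.sum_subset (Finset.range_subset_range.mpr hn) fun k _ hk => ?_
  have hik : i < k := by simp only [Finset.mem_range, not_lt] at hk; omega
  simp [hφ _ _ hik]

theorem not_isCompleteWrt_osProjNorm (hV : ¬FiniteDimensional ℂ V) (hW : ¬FiniteDimensional ℂ W) :
    ¬IsCompleteWrt (osProjNorm osV osW) := by
  intro H
  obtain ⟨a, φ, ha, hφ_lt, hφ_self⟩ := exists_triangular_system hV
  obtain ⟨b, ψ, hb, hψ_lt, hψ_self⟩ := exists_triangular_system hW
  set x : ℕ → V := fun k => (2⁻¹ : ℂ) ^ k • a k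
  have hx_lt : ∀ i k, i < k → φ i (x k) = 0 := fun i k hik => by simp [x, hφ_lt i k hik]
  have hsum : Summable fun k => ‖x k‖ * ‖b k‖ := by
    refine Summable.of_nonneg_of_le (fun k => by positivity) (fun k => ?_)
      (summable_geometric_of_lt_one (by norm_num) (by norm_num : (2⁻¹ : ℝ) < 1))
    simp only [x, norm_smul, norm_pow, norm_inv, RCLike.norm_ofNat]
    calc 2⁻¹ ^ k * ‖a k‖ * ‖b k‖ ≤ 2⁻¹ ^ k * 1 * 1 := by gcongr; exacts [ha k, hb k]
      _ = 2⁻¹ ^ k := by ring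
  obtain ⟨u, hu⟩ := H _ (isCauchyWrt_osProjNorm_sum_range_tmul osV osW x b hsum)
  obtain ⟨r, hr⟩ := TensorProduct.exists_rank_dualDistrib_le u
  set L : Matrix (Fin (r + 1)) (Fin (r + 1)) ℂ := Matrix.of fun i k => φ i (x k)
  set R : Matrix (Fin (r + 1)) (Fin (r + 1)) ℂ := Matrix.of fun k j => ψ j (b k)
  have hu_eq : (Matrix.of fun i j : Fin (r + 1) => dualTmul (φ i) (ψ j) u) = L * R := by
    ext i j
    rw [of_apply, dualTmul_eq_of_tendstoWrt_sum_range_tmul osV osW x b φ hx_lt _ hu i.isLt,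
      Finset.sum_range]
    rfl
  have hLR : IsUnit (L * R) :=
    isUnit_mul_of_isLowerTriangular_of_isUpperTriangular (fun i k (hik : i < k) => hx_lt _ _ hik)
      (fun k j (hjk : j < k) => hψ_lt _ _ hjk) (fun i => by simp [L, x, hφ_self])
      (fun i => hψ_self i)
  have hrank : (Matrix.of fun i j : Fin (r + 1) => dualTmul (φ i) (ψ j) u).rank ≤ r :=
    hr (r + 1) (fun i => φ i) (fun j => ψ j)
  rw [hu_eq, rank_of_isUnit _ hLR, Fintype.card_fin] at hrank
  omega

end ProjectiveNorm

end

theorem osProjTensor_complete_iff_finiteDimensional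
    (V W : Type) [NormedAddCommGroup V] [NormedSpace ℂ V] [CompleteSpace V]
    [NormedAddCommGroup W] [NormedSpace ℂ W] [CompleteSpace W]
    (osV : OperatorSpaceStructure V) (osW : OperatorSpaceStructure W) :
    (∀ f : ℕ → V ⊗[ℂ] W,
        (∀ ε : ℝ, 0 < ε → ∃ N : ℕ, ∀ m ≥ N, ∀ n ≥ N, osProjNorm osV osW (f m - f n) < ε) →
        ∃ u : V ⊗[ℂ] W, ∀ ε : ℝ, 0 < ε → ∃ N : ℕ, ∀ n ≥ N, osProjNorm osV osW (f n - u) < ε) ↔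
      (FiniteDimensional ℂ V ∨ FiniteDimensional ℂ W) := by
  change IsCompleteWrt (osProjNorm osV osW) ↔ _
  refine ⟨fun H => ?_, ?_⟩
  · by_contra! h
    exact not_isCompleteWrt_osProjNorm osV osW h.1 h.2 H
  · rintro (_ | _)
    · exact isCompleteWrt_osProjNorm_of_finiteDimensional_left osV osW
    · exact isCompleteWrt_osProjNorm_of_finiteDimensional_right osV osW
end

section
/- Let X be a Banach *-algebra having the Wiener property. Then X has spectral synthesis if and only if the map J ↦ Z_J = {P ∈ Prim(X) : P ⊉ J} is a one-one correspondence between the closed two-sided ideals of X and the τ_w-open subsets of Prim(X). -/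
open scoped TensorProduct

open Topology

/-!
Since `Z_J` determines the hull `h(J)`, which is always hull-kernel closed, spectral synthesis says
exactly that every closed ideal is the kernel of its hull, i.e. that `J ↦ Z_J` is injective.
The other two conditions hold in every Banach `*`-algebra: each `Z_J` is `τ_w`-open by definition,
and conversely the sets `Z_J` contain `Prim(X) = Z_X` and are stable under unions
(`⋃ Z_{J_i} = Z_{closure (∑ J_i)}`) and finite intersections (`Z_J ∩ Z_K = Z_{J ∩ K}`, as
primitive ideals are prime), so they exhaust the topology that they generate.
-/

section ClosedIdeals

variable {X : Type} [NonUnitalNormedRing X] [NormedSpace ℂ X]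

namespace IsClosedIdeal

lemma top : IsClosedIdeal X ⊤ :=
  ⟨isClosed_univ, fun _ _ _ => trivial, fun _ _ _ => trivial⟩

lemma inf {J K : Submodule ℂ X} (hJ : IsClosedIdeal X J) (hK : IsClosedIdeal X K) :
    IsClosedIdeal X (J ⊓ K) :=
  ⟨hJ.1.inter hK.1, fun x _ hy => ⟨hJ.2.1 x _ hy.1, hK.2.1 x _ hy.2⟩,
    fun x _ hy => ⟨hJ.2.2 x _ hy.1, hK.2.2 x _ hy.2⟩⟩

lemma sInf {E : Set (Submodule ℂ X)} (hE : ∀ P ∈ E, IsClosedIdeal X P) :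
    IsClosedIdeal X (sInf E) := by
  refine ⟨?_, fun x y hy => ?_, fun x y hy => ?_⟩
  · rw [Submodule.coe_sInf]
    exact isClosed_biInter fun P hP => (hE P hP).1
  · exact Submodule.mem_sInf.mpr fun P hP => (hE P hP).2.1 x y (Submodule.mem_sInf.mp hy P hP)
  · exact Submodule.mem_sInf.mpr fun P hP => (hE P hP).2.2 x y (Submodule.mem_sInf.mp hy P hP)

lemma topologicalClosure {S : Submodule ℂ X} (hl : ∀ x : X, ∀ y ∈ S, x * y ∈ S)
    (hr : ∀ x : X, ∀ y ∈ S, y * x ∈ S) : IsClosedIdeal X S.topologicalClosure := by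
  refine ⟨S.isClosed_topologicalClosure, fun x y hy => ?_, fun x y hy => ?_⟩
  · rw [← SetLike.mem_coe, Submodule.topologicalClosure_coe] at hy ⊢
    exact map_mem_closure (continuous_const_mul x) hy fun z hz => hl x z hz
  · rw [← SetLike.mem_coe, Submodule.topologicalClosure_coe] at hy ⊢
    exact map_mem_closure (f := (· * x)) (continuous_mul_const x) hy fun z hz => hr x z hz

lemma topologicalClosure_iSup {ι : Type} {J : ι → Submodule ℂ X}
    (hJ : ∀ i, IsClosedIdeal X (J i)) : IsClosedIdeal X (⨆ i, J i).topologicalClosure := by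
  refine topologicalClosure (fun x y hy => ?_) (fun x y hy => ?_)
  · refine Submodule.iSup_induction J (motive := fun y => x * y ∈ ⨆ i, J i) hy
      (fun i y hy => Submodule.mem_iSup_of_mem i ((hJ i).2.1 x y hy)) ?_ fun y z hy hz => ?_
    · rw [mul_zero]; exact zero_mem _
    · rw [mul_add]; exact add_mem hy hz
  · refine Submodule.iSup_induction J (motive := fun y => y * x ∈ ⨆ i, J i) hy
      (fun i y hy => Submodule.mem_iSup_of_mem i ((hJ i).2.2 x y hy)) ?_ fun y z hy hz => ?_
    · rw [zero_mul]; exact zero_mem _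
    · rw [add_mul]; exact add_mem hy hz

end IsClosedIdeal

end ClosedIdeals

section PrimitiveIdeals

variable {X : Type} [NonUnitalNormedRing X] [StarRing X] [NormedSpace ℂ X]

lemma StarRepOn.continuous_hom (ρ : StarRepOn X) : Continuous fun x => ρ.hom x :=
  AddMonoidHomClass.continuous_of_bound ρ.hom 1 fun x => by simpa using ρ.contractive x

def StarRepOn.essentialSubspace (ρ : StarRepOn X) (K : Submodule ℂ X) :
    Submodule ℂ ρ.carrier :=
  (Submodule.span ℂ {w | ∃ y ∈ K, ∃ v, w = ρ.hom y v}).topologicalClosure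

namespace StarRepOn

variable (ρ : StarRepOn X) {K : Submodule ℂ X}

lemma mem_iff_of_coe_eq_ker {P : Submodule ℂ X} (hP : (P : Set X) = {x | ρ.hom x = 0})
    {x : X} : x ∈ P ↔ ρ.hom x = 0 :=
  Set.ext_iff.mp hP x

lemma apply_mem_essentialSubspace {y : X} (hy : y ∈ K) (v : ρ.carrier) :
    ρ.hom y v ∈ ρ.essentialSubspace K :=
  Submodule.le_topologicalClosure _ (Submodule.subset_span ⟨y, hy, v, rfl⟩)

lemma essentialSubspace_le {U : Submodule ℂ ρ.carrier} (hU : IsClosed (U : Set ρ.carrier))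
    (h : ∀ y ∈ K, ∀ v, ρ.hom y v ∈ U) : ρ.essentialSubspace K ≤ U := by
  refine Submodule.topologicalClosure_minimal _ (Submodule.span_le.mpr ?_) hU
  rintro _ ⟨y, hy, v, rfl⟩
  exact h y hy v

lemma apply_mem_essentialSubspace_of_mem (hK : ∀ x : X, ∀ y ∈ K, x * y ∈ K) (x : X)
    {w : ρ.carrier} (hw : w ∈ ρ.essentialSubspace K) : ρ.hom x w ∈ ρ.essentialSubspace K := by
  have hcomap : IsClosed ((ρ.essentialSubspace K).comap (ρ.hom x : ρ.carrier →ₗ[ℂ] ρ.carrier) :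
      Set ρ.carrier) :=
    (Submodule.isClosed_topologicalClosure _).preimage (ρ.hom x).continuous
  refine ρ.essentialSubspace_le hcomap (fun y hy v => ?_) hw
  have h := ρ.apply_mem_essentialSubspace (hK x y hy) v
  rwa [map_mul] at h

end StarRepOn

namespace IsPrimitiveIdeal

variable {P : Submodule ℂ X}

lemma isClosedIdeal (hP : IsPrimitiveIdeal X P) : IsClosedIdeal X P := by
  obtain ⟨ρ, -, hPρ⟩ := hP
  refine ⟨?_, fun x y hy => ?_, fun x y hy => ?_⟩
  · rw [hPρ]
    exact isClosed_singleton.preimage ρ.continuous_hom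
  · rw [ρ.mem_iff_of_coe_eq_ker hPρ] at hy ⊢
    rw [map_mul, hy, mul_zero]
  · rw [ρ.mem_iff_of_coe_eq_ker hPρ] at hy ⊢
    rw [map_mul, hy, zero_mul]

lemma ne_top (hP : IsPrimitiveIdeal X P) : P ≠ ⊤ := by
  obtain ⟨ρ, ⟨⟨x, hx⟩, -⟩, hPρ⟩ := hP
  intro htop
  exact hx (ρ.mem_iff_of_coe_eq_ker hPρ |>.mp (htop ▸ Submodule.mem_top))

/-- The closed invariant subspace `[ρ(K) H]` is `0`, so that `K ⊆ P`, or everything, in which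
case `ρ(J) [ρ(K) H] = ρ(JK) H = 0` gives `J ⊆ P`. -/
lemma isPrimeIdeal (hP : IsPrimitiveIdeal X P) : IsPrimeIdeal X P := by
  refine ⟨hP.isClosedIdeal, hP.ne_top, fun J K _ hK hJK => ?_⟩
  obtain ⟨ρ, ⟨-, hirr⟩, hPρ⟩ := hP
  rcases hirr (ρ.essentialSubspace K) (Submodule.isClosed_topologicalClosure _)
      (ρ.apply_mem_essentialSubspace_of_mem hK.2.1) with hbot | htop
  · refine Or.inr fun y hy => (ρ.mem_iff_of_coe_eq_ker hPρ).mpr ?_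
    ext v
    simpa [hbot] using ρ.apply_mem_essentialSubspace hy v
  · refine Or.inl fun x hx => (ρ.mem_iff_of_coe_eq_ker hPρ).mpr ?_
    have hker : ρ.essentialSubspace K ≤ LinearMap.ker (ρ.hom x : ρ.carrier →ₗ[ℂ] ρ.carrier) := by
      refine ρ.essentialSubspace_le (ContinuousLinearMap.isClosed_ker (ρ.hom x)) fun y hy v => ?_
      have h := congrArg (· v) ((ρ.mem_iff_of_coe_eq_ker hPρ).mp (hJK x hx y hy))
      rwa [map_mul] at h
    ext v
    exact hker (htop ▸ Submodule.mem_top)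

end IsPrimitiveIdeal

end PrimitiveIdeals

section HullKernel

variable {X : Type} [NonUnitalNormedRing X] [StarRing X] [NormedSpace ℂ X]

/-- `Z_J`, the complement in `Prim(X)` of the hull of `J`. -/
def hullCompl (J : Submodule ℂ X) : Set {P : Submodule ℂ X // IsPrimitiveIdeal X P} :=
  {P | ¬ J ≤ P.1}

lemma hullCompl_top : hullCompl (⊤ : Submodule ℂ X) = Set.univ :=
  Set.eq_univ_of_forall fun P hP => P.2.ne_top (top_le_iff.mp hP)

lemma hullCompl_inf {J K : Submodule ℂ X} (hJ : IsClosedIdeal X J) (hK : IsClosedIdeal X K) :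
    hullCompl (J ⊓ K) = hullCompl J ∩ hullCompl K := by
  ext P
  suffices J ⊓ K ≤ P.1 ↔ J ≤ P.1 ∨ K ≤ P.1 by
    simp only [hullCompl, Set.mem_inter_iff, Set.mem_ofPred_eq, this, not_or]
  refine ⟨fun h => P.2.isPrimeIdeal.2.2 J K hJ hK fun x hx y hy => h ?_, ?_⟩
  · exact ⟨hJ.2.2 y x hx, hK.2.1 x y hy⟩
  · rintro (h | h)
    · exact inf_le_left.trans h
    · exact inf_le_right.trans h

lemma hullCompl_topologicalClosure_iSup {ι : Type} (J : ι → Submodule ℂ X) :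
    hullCompl (⨆ i, J i).topologicalClosure = ⋃ i, hullCompl (J i) := by
  ext P
  suffices (⨆ i, J i).topologicalClosure ≤ P.1 ↔ ∀ i, J i ≤ P.1 by
    simp only [hullCompl, Set.mem_iUnion, Set.mem_ofPred_eq, this, not_forall]
  refine ⟨fun h i => (le_iSup J i).trans ((Submodule.le_topologicalClosure _).trans h),
    fun h => Submodule.topologicalClosure_minimal _ (iSup_le h) P.2.isClosedIdeal.1⟩

lemma hullCompl_eq_hullCompl_iff {J K : Submodule ℂ X} :
    hullCompl J = hullCompl K ↔ hullOf X J = hullOf X K := by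
  simp only [Set.ext_iff, hullCompl, hullOf, Set.mem_ofPred_eq, not_iff_not, SetLike.coe_subset_coe,
    Subtype.forall, and_congr_right_iff]

lemma isHkClosed_hullOf (M : Set X) : IsHkClosed X (hullOf X M) := by
  refine ⟨fun P hP => hP.1, Set.Subset.antisymm ?_ ?_⟩
  · rintro Q ⟨hQ, hMQ⟩
    exact ⟨hQ, fun x hx => hMQ (Submodule.mem_sInf.mpr fun P hP => hP.2 hx)⟩
  · rintro Q hQ
    exact ⟨hQ.1, fun x hx => Submodule.mem_sInf.mp hx Q hQ⟩

lemma hasSpectralSynthesis_iff_injective_hullCompl :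
    HasSpectralSynthesis X ↔
      Function.Injective fun J : {J : Submodule ℂ X // IsClosedIdeal X J} => hullCompl J.1 := by
  refine ⟨fun hX J K hJK => ?_, fun hinj E hE J hJ hJE => ?_⟩
  · have hhull := hullCompl_eq_hullCompl_iff.mp hJK
    have hE := isHkClosed_hullOf (J.1 : Set X)
    exact Subtype.ext ((hX _ hE J.1 J.2 rfl).trans (hX _ hE K.1 K.2 hhull.symm).symm)
  · have hkE : IsClosedIdeal X (kernelOf X E) :=
      IsClosedIdeal.sInf fun P hP => (hE.1 P hP).isClosedIdeal
    exact congrArg Subtype.val (@hinj ⟨J, hJ⟩ ⟨_, hkE⟩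
      (hullCompl_eq_hullCompl_iff.mpr (hJE.trans hE.2.symm)))

end HullKernel

section TauW

variable {X : Type} [NonUnitalNormedRing X] [StarRing X] [NormedSpace ℂ X]

lemma isOpen_hullCompl {J : Submodule ℂ X} (hJ : IsClosedIdeal X J) :
    letI : TopologicalSpace (Submodule ℂ X) := tauW X
    IsOpen (hullCompl J) := by
  let : TopologicalSpace (Submodule ℂ X) := tauW X
  have hZ : IsOpen {I : Submodule ℂ X | ¬ J ≤ I} :=
    TopologicalSpace.isOpen_generateFrom_of_mem ⟨J, hJ, rfl⟩
  exact hZ.preimage continuous_subtype_val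

lemma exists_hullCompl_eq_preimage_of_isOpen {V : Set (Submodule ℂ X)}
    (hV : IsOpen[tauW X] V) :
    ∃ J : {J : Submodule ℂ X // IsClosedIdeal X J}, hullCompl J.1 = Subtype.val ⁻¹' V := by
  induction hV with
  | basic S hS =>
    obtain ⟨J, hJ, rfl⟩ := hS
    exact ⟨⟨J, hJ⟩, rfl⟩
  | univ => exact ⟨⟨⊤, IsClosedIdeal.top⟩, hullCompl_top⟩
  | inter V W _ _ hV hW =>
    obtain ⟨⟨J, hJ⟩, hJV⟩ := hV
    obtain ⟨⟨K, hK⟩, hKW⟩ := hW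
    exact ⟨⟨J ⊓ K, hJ.inf hK⟩, by rw [hullCompl_inf hJ hK, hJV, hKW, Set.preimage_inter]⟩
  | sUnion S _ hS =>
    choose J hJ using fun s : S => hS s.1 s.2
    refine ⟨⟨_, IsClosedIdeal.topologicalClosure_iSup fun s => (J s).2⟩, ?_⟩
    rw [hullCompl_topologicalClosure_iSup, Set.preimage_sUnion, Set.biUnion_eq_iUnion]
    exact Set.iUnion_congr hJ

lemma exists_hullCompl_eq_of_isOpen :
    letI : TopologicalSpace (Submodule ℂ X) := tauW X
    ∀ U : Set {P : Submodule ℂ X // IsPrimitiveIdeal X P}, IsOpen U →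
      ∃ J : {J : Submodule ℂ X // IsClosedIdeal X J}, U = hullCompl J.1 := by
  let : TopologicalSpace (Submodule ℂ X) := tauW X
  intro U hU
  obtain ⟨V, hV, rfl⟩ := isOpen_induced_iff.mp hU
  obtain ⟨J, hJ⟩ := exists_hullCompl_eq_preimage_of_isOpen hV
  exact ⟨J, hJ.symm⟩

end TauW

theorem hasSpectralSynthesis_iff_bijective_correspondence_general
    (X : Type) [NonUnitalNormedRing X] [StarRing X] [NormedSpace ℂ X] :
    letI : TopologicalSpace (Submodule ℂ X) := tauW X
    (HasSpectralSynthesis X ↔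
      (Function.Injective fun J : {J : Submodule ℂ X // IsClosedIdeal X J} =>
          ({P | ¬ J.1 ≤ P.1} : Set {P : Submodule ℂ X // IsPrimitiveIdeal X P})) ∧
        (∀ J : {J : Submodule ℂ X // IsClosedIdeal X J},
          IsOpen ({P | ¬ J.1 ≤ P.1} : Set {P : Submodule ℂ X // IsPrimitiveIdeal X P})) ∧
        (∀ U : Set {P : Submodule ℂ X // IsPrimitiveIdeal X P}, IsOpen U →
          ∃ J : {J : Submodule ℂ X // IsClosedIdeal X J}, U = {P | ¬ J.1 ≤ P.1})) :=
  hasSpectralSynthesis_iff_injective_hullCompl.trans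
    ⟨fun hinj => ⟨hinj, fun J => isOpen_hullCompl J.2, exists_hullCompl_eq_of_isOpen⟩,
      fun h => h.1⟩

theorem hasSpectralSynthesis_iff_bijective_correspondence
    (X : Type) [NonUnitalNormedRing X] [StarRing X] [NormedSpace ℂ X] [CompleteSpace X]
    [IsScalarTower ℂ X X] [SMulCommClass ℂ X X] [StarModule ℂ X] [NormedStarGroup X]
    (hW : WienerProperty X) :
    letI : TopologicalSpace (Submodule ℂ X) := tauW X
    (HasSpectralSynthesis X ↔
      (Function.Injective fun J : {J : Submodule ℂ X // IsClosedIdeal X J} =>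
          ({P | ¬ J.1 ≤ P.1} : Set {P : Submodule ℂ X // IsPrimitiveIdeal X P})) ∧
        (∀ J : {J : Submodule ℂ X // IsClosedIdeal X J},
          IsOpen ({P | ¬ J.1 ≤ P.1} : Set {P : Submodule ℂ X // IsPrimitiveIdeal X P})) ∧
        (∀ U : Set {P : Submodule ℂ X // IsPrimitiveIdeal X P}, IsOpen U →
          ∃ J : {J : Submodule ℂ X // IsClosedIdeal X J}, U = {P | ¬ J.1 ≤ P.1})) :=
  hasSpectralSynthesis_iff_bijective_correspondence_general X
end
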